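/- Fix q with 1 < q < 2, a relaxation interval ε = [ε₋, ε₊] with 0 < ε₋ ≤ ε₊ < ∞, and let Ω ⊂ ℝ^d be a measurable set of finite Lebesgue measure. Let σ_ε, τ_n ∈ L²(Ω; ℝ^d) satisfy the Euler–Lagrange orthogonality ∫_Ω A*_ε(σ_ε)·(τ_n - σ_ε) dx = 0, and set w_n = clamp_ε(|τ_n|)^{q-2}. Then there exists a constant C_q < ∞ depending solely on q (independent of ε) such that (1/2)∫_Ω w_n |τ_n - σ_ε|² dx ≤ C_q (ε₊/ε₋)^{2-q} (J*_ε(τ_n) - J*_ε(σ_ε)). -/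

import Mathlib

open Real MeasureTheory
open scoped RealInnerProductSpace

/-- The relaxed integrand `κ*_ε`. -/
noncomputable def kappaStar (q em ep t : ℝ) : ℝ :=
  if t ≤ em then (1/2) * em ^ (q-2) * t^2 + (1/q - 1/2) * em ^ q
  else if t ≤ ep then (1/q) * t ^ q
  else (1/2) * ep ^ (q-2) * t^2 + (1/q - 1/2) * ep ^ q

/-- The relaxed dual energy `J*_ε(τ) = ∫_Ω κ*_ε(|τ|) dx`. -/
noncomputable def Jeps (q em ep : ℝ) {d : ℕ} (Ω : Set (EuclideanSpace ℝ (Fin d)))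
    (τ : EuclideanSpace ℝ (Fin d) → EuclideanSpace ℝ (Fin d)) : ℝ :=
  ∫ x in Ω, kappaStar q em ep ‖τ x‖

/-- `A*_ε(P) = clamp_ε(|P|)^(q-2) P`. -/
noncomputable def Astar (q em ep : ℝ) {d : ℕ} (P : EuclideanSpace ℝ (Fin d)) :
    EuclideanSpace ℝ (Fin d) :=
  (max em (min ‖P‖ ep)) ^ (q-2) • P

/-!
On the closed pieces `(-∞, ε₋]`, `[ε₋, ε₊]`, `[ε₊, ∞)` the integrand `κ*_ε` is a quadratic or
`t ^ q / q`; the pieces glue to a `C¹` function with derivative `t ↦ clamp_ε(t) ^ (q-2) t`, and this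
derivative grows at least with slope `λ = (q-1) ε₊ ^ (q-2)`, so `κ*_ε - λ t² / 2` is convex. The
resulting tangent inequality lifts to vectors because `⟪A, B⟫ ≤ |A| |B|` and `clamp_ε ^ (q-2) ≥ λ`:
`κ*_ε(|B|) ≥ κ*_ε(|A|) + A*_ε(A)·(B - A) + λ/2 |B - A|²`.
As `clamp_ε(|τ|) ^ (q-2) ≤ ε₋ ^ (q-2) = (ε₊/ε₋) ^ (2-q) ε₊ ^ (q-2)`, integrating this with
`A = σ_ε`, `B = τ_n` and using the orthogonality gives the claim with `C_q = 1 / (q - 1)`.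
-/

open Set

section Calculus

lemma hasDerivWithinAt_of_eqOn_isClosed {f g f' : ℝ → ℝ} {s : Set ℝ} (hs : IsClosed s)
    (hfg : EqOn f g s) (hg : ∀ x ∈ s, HasDerivAt g (f' x) x) (x : ℝ) :
    HasDerivWithinAt f (f' x) s x := by
  by_cases hx : x ∈ s
  · exact (hg x hx).hasDerivWithinAt.congr hfg (hfg hx)
  · -- `𝓝[s] x = ⊥`, so every number is a derivative within `s` at `x`
    exact HasFDerivWithinAt.of_notMem_closure (by rwa [hs.closure_eq])

lemma add_mul_sub_le_of_hasDerivAt_of_monotone {f f' : ℝ → ℝ}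
    (hf : ∀ x, HasDerivAt f (f' x) x) (hf' : Monotone f') (a b : ℝ) :
    f a + f' a * (b - a) ≤ f b := by
  have hderiv : deriv f = f' := funext fun x => (hf x).deriv
  have hconv : ConvexOn ℝ univ f :=
    Monotone.convexOn_univ_of_deriv (fun x => (hf x).differentiableAt) (hderiv ▸ hf')
  rcases lt_trichotomy a b with hab | rfl | hab
  · have h := hconv.le_slope_of_hasDerivAt (mem_univ a) (mem_univ b) hab (hf a)
    rw [slope_def_field, le_div_iff₀ (sub_pos.2 hab)] at h
    linarith
  · simp
  · have h := hconv.slope_le_of_hasDerivAt (mem_univ b) (mem_univ a) hab (hf a)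
    rw [slope_def_field, div_le_iff₀ (sub_pos.2 hab)] at h
    linarith

end Calculus

section Clamp

variable {em ep t : ℝ}

lemma clamp_of_le (hee : em ≤ ep) (ht : t ≤ em) : max em (min t ep) = em := by
  rw [min_eq_left (ht.trans hee), max_eq_left ht]

lemma clamp_of_mem_Icc (ht : t ∈ Icc em ep) : max em (min t ep) = t := by
  rw [min_eq_left ht.2, max_eq_right ht.1]

lemma clamp_of_ge (hee : em ≤ ep) (ht : ep ≤ t) : max em (min t ep) = ep := by
  rw [min_eq_right ht, max_eq_right hee]

lemma continuous_clamp_rpow (hem : 0 < em) (y : ℝ) :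
    Continuous fun t : ℝ => max em (min t ep) ^ y :=
  (continuous_const.max (continuous_id.min continuous_const)).rpow_const
    fun _ => Or.inl (hem.trans_le (le_max_left _ _)).ne'

lemma clamp_rpow_le (hem : 0 < em) {y : ℝ} (hy : y ≤ 0) : max em (min t ep) ^ y ≤ em ^ y :=
  rpow_le_rpow_of_nonpos hem (le_max_left _ _) hy

lemma rpow_le_clamp_rpow (hem : 0 < em) (hee : em ≤ ep) {y : ℝ} (hy : y ≤ 0) :
    ep ^ y ≤ max em (min t ep) ^ y :=
  rpow_le_rpow_of_nonpos (hem.trans_le (le_max_left _ _)) (max_le hee (min_le_right _ _)) hy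

end Clamp

lemma rpow_sub_two_mul_self {x : ℝ} (hx : 0 < x) (q : ℝ) : x ^ (q - 2) * x = x ^ (q - 1) := by
  rw [← rpow_add_one hx.ne']; ring_nf

lemma rpow_sub_two_mul_sq {x : ℝ} (hx : 0 < x) (q : ℝ) : x ^ (q - 2) * x ^ 2 = x ^ q := by
  rw [← rpow_natCast, ← rpow_add hx]; norm_num

noncomputable def kappaStarDeriv (q em ep t : ℝ) : ℝ := max em (min t ep) ^ (q - 2) * t

section Scalar

variable {q em ep : ℝ}

lemma kappaStar_eq_clamp (hem : 0 < em) (hee : em ≤ ep) (t : ℝ) :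
    kappaStar q em ep t = 1 / 2 * max em (min t ep) ^ (q - 2) * t ^ 2
      + (1 / q - 1 / 2) * max em (min t ep) ^ q := by
  unfold kappaStar
  split_ifs with h₁ h₂
  · rw [clamp_of_le hee h₁]
  · have ht : 0 < t := hem.trans (not_le.1 h₁)
    rw [clamp_of_mem_Icc ⟨(not_le.1 h₁).le, h₂⟩, mul_assoc, rpow_sub_two_mul_sq ht]
    ring
  · rw [clamp_of_ge hee (not_le.1 h₂).le]

lemma hasDerivAt_kappaStar (hq : q ≠ 0) (hem : 0 < em) (hee : em ≤ ep) (t : ℝ) :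
    HasDerivAt (kappaStar q em ep) (kappaStarDeriv q em ep t) t := by
  have hquad : ∀ c u : ℝ,
      HasDerivAt (fun u => 1 / 2 * c ^ (q - 2) * u ^ 2 + (1 / q - 1 / 2) * c ^ q)
        (c ^ (q - 2) * u) u := fun c u =>
    (((hasDerivAt_pow 2 u).const_mul _).add_const _).congr_deriv (by norm_num; ring)
  have hlow := hasDerivWithinAt_of_eqOn_isClosed (f := kappaStar q em ep)
    (f' := kappaStarDeriv q em ep) isClosed_Iic
    (fun u hu => by rw [kappaStar_eq_clamp hem hee, clamp_of_le hee hu])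
    (fun u hu => by rw [kappaStarDeriv, clamp_of_le hee hu]; exact hquad em u) t
  have hmid := hasDerivWithinAt_of_eqOn_isClosed (f := kappaStar q em ep)
    (f' := kappaStarDeriv q em ep) (g := fun u => u ^ q / q) isClosed_Icc
    (fun u hu => by
      rw [kappaStar_eq_clamp hem hee, clamp_of_mem_Icc hu, mul_assoc,
        rpow_sub_two_mul_sq (hem.trans_le hu.1)]
      ring)
    (fun u hu => by
      have hu0 : 0 < u := hem.trans_le hu.1
      rw [kappaStarDeriv, clamp_of_mem_Icc hu, rpow_sub_two_mul_self hu0]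
      exact ((hasDerivAt_rpow_const (Or.inl hu0.ne')).div_const q).congr_deriv
        (mul_div_cancel_left₀ _ hq)) t
  have hhigh := hasDerivWithinAt_of_eqOn_isClosed (f := kappaStar q em ep)
    (f' := kappaStarDeriv q em ep) isClosed_Ici
    (fun u hu => by rw [kappaStar_eq_clamp hem hee, clamp_of_ge hee hu])
    (fun u hu => by rw [kappaStarDeriv, clamp_of_ge hee hu]; exact hquad ep u) t
  have hcover : Iic em ∪ Icc em ep ∪ Ici ep = univ := by
    rw [Iic_union_Icc_eq_Iic hee, Iic_union_Ici]
  simpa only [hcover, hasDerivWithinAt_univ] using (hlow.union hmid).union hhigh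

lemma monotoneOn_rpow_sub_one_sub_mul (hq1 : 1 ≤ q) (hq2 : q ≤ 2) (hem : 0 < em) :
    MonotoneOn (fun u => u ^ (q - 1) - (q - 1) * ep ^ (q - 2) * u) (Icc em ep) := by
  refine monotoneOn_of_hasDerivWithinAt_nonneg
    (f' := fun u => (q - 1) * u ^ (q - 2) - (q - 1) * ep ^ (q - 2)) (convex_Icc em ep)
    ((continuous_id.rpow_const fun _ => Or.inr (by linarith)).sub
      (continuous_const_mul _)).continuousOn (fun u hu => ?_) (fun u hu => ?_)
  · rw [interior_Icc] at hu
    refine (((hasDerivAt_rpow_const (Or.inl (hem.trans hu.1).ne')).sub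
      ((hasDerivAt_id u).const_mul _)).congr_deriv ?_).hasDerivWithinAt
    ring_nf
  · rw [interior_Icc] at hu
    have : ep ^ (q - 2) ≤ u ^ (q - 2) :=
      rpow_le_rpow_of_nonpos (hem.trans hu.1) hu.2.le (by linarith)
    nlinarith

lemma monotone_kappaStarDeriv_sub (hq1 : 1 ≤ q) (hq2 : q ≤ 2) (hem : 0 < em) (hee : em ≤ ep) :
    Monotone fun t => kappaStarDeriv q em ep t - (q - 1) * ep ^ (q - 2) * t := by
  have hep : 0 < ep := hem.trans_le hee
  have hpow : ep ^ (q - 2) ≤ em ^ (q - 2) := rpow_le_rpow_of_nonpos hem hee (by linarith)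
  have hep_pow : 0 < ep ^ (q - 2) := rpow_pos_of_pos hep _
  have hslope_high : 0 ≤ ep ^ (q - 2) - (q - 1) * ep ^ (q - 2) := by nlinarith
  have hslope_low : 0 ≤ em ^ (q - 2) - (q - 1) * ep ^ (q - 2) := by linarith
  have hlow : MonotoneOn (fun t => kappaStarDeriv q em ep t - (q - 1) * ep ^ (q - 2) * t)
      (Iic em) := fun u hu v hv huv => by
    simp only [kappaStarDeriv, clamp_of_le hee hu, clamp_of_le hee hv]
    nlinarith [mul_nonneg hslope_low (sub_nonneg.2 huv)]
  have hmid : MonotoneOn (fun t => kappaStarDeriv q em ep t - (q - 1) * ep ^ (q - 2) * t)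
      (Icc em ep) :=
    (monotoneOn_rpow_sub_one_sub_mul hq1 hq2 hem).congr fun u hu => by
      simp only [kappaStarDeriv, clamp_of_mem_Icc hu, rpow_sub_two_mul_self (hem.trans_le hu.1)]
  have hhigh : MonotoneOn (fun t => kappaStarDeriv q em ep t - (q - 1) * ep ^ (q - 2) * t)
      (Ici ep) := fun u hu v hv huv => by
    simp only [kappaStarDeriv, clamp_of_ge hee hu, clamp_of_ge hee hv]
    nlinarith [mul_nonneg hslope_high (sub_nonneg.2 huv)]
  have hlowmid := hlow.union_right hmid isGreatest_Iic (isLeast_Icc hee)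
  rw [Iic_union_Icc_eq_Iic hee] at hlowmid
  exact hlowmid.Iic_union_Ici hhigh

lemma kappaStar_add_le (hq1 : 1 ≤ q) (hq2 : q ≤ 2) (hem : 0 < em) (hee : em ≤ ep) (a b : ℝ) :
    kappaStar q em ep a + kappaStarDeriv q em ep a * (b - a)
      + (q - 1) * ep ^ (q - 2) / 2 * (b - a) ^ 2 ≤ kappaStar q em ep b := by
  have h := add_mul_sub_le_of_hasDerivAt_of_monotone
    (f := fun t => kappaStar q em ep t - (q - 1) * ep ^ (q - 2) / 2 * t ^ 2)
    (fun t => (hasDerivAt_kappaStar (by linarith) hem hee t).sub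
      (((hasDerivAt_pow 2 t).const_mul _).congr_deriv (by norm_num; ring)))
    (monotone_kappaStarDeriv_sub hq1 hq2 hem hee) a b
  linear_combination h

lemma abs_kappaStar_le (hq1 : 1 ≤ q) (hq2 : q ≤ 2) (hem : 0 < em) (hee : em ≤ ep) (t : ℝ) :
    |kappaStar q em ep t| ≤ 1 / 2 * em ^ (q - 2) * t ^ 2 + (1 / q - 1 / 2) * ep ^ q := by
  have hq : 0 ≤ 1 / q - 1 / 2 := by
    rw [sub_nonneg]; exact one_div_le_one_div_of_le (by linarith) hq2
  have hc : 0 < max em (min t ep) := hem.trans_le (le_max_left _ _)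
  have hlow := clamp_rpow_le (t := t) (ep := ep) hem (by linarith : q - 2 ≤ 0)
  have hhigh : max em (min t ep) ^ q ≤ ep ^ q :=
    rpow_le_rpow hc.le (max_le hee (min_le_right _ _)) (by linarith)
  rw [kappaStar_eq_clamp hem hee,
    abs_of_nonneg (add_nonneg (by positivity) (mul_nonneg hq (rpow_nonneg hc.le _)))]
  gcongr

end Scalar

lemma div_rpow_sub_mul_rpow_sub {em ep : ℝ} (hem : 0 < em) (hep : 0 < ep) (q : ℝ) :
    (ep / em) ^ (2 - q) * ep ^ (q - 2) = em ^ (q - 2) := by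
  rw [div_rpow hep.le hem.le, show q - 2 = -(2 - q) by ring, rpow_neg hep.le, rpow_neg hem.le]
  have : 0 < ep ^ (2 - q) := rpow_pos_of_pos hep _
  field_simp

section InnerProductSpace

variable {E : Type*} [NormedAddCommGroup E] [InnerProductSpace ℝ E] {q em ep : ℝ}

lemma kappaStar_norm_add_inner_le (hq1 : 1 ≤ q) (hq2 : q ≤ 2) (hem : 0 < em) (hee : em ≤ ep)
    (A B : E) :
    kappaStar q em ep ‖A‖ + ⟪max em (min ‖A‖ ep) ^ (q - 2) • A, B - A⟫
      + (q - 1) * ep ^ (q - 2) / 2 * ‖B - A‖ ^ 2 ≤ kappaStar q em ep ‖B‖ := by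
  have hscalar := kappaStar_add_le hq1 hq2 hem hee ‖A‖ ‖B‖
  have hweight : (q - 1) * ep ^ (q - 2) ≤ max em (min ‖A‖ ep) ^ (q - 2) := by
    have := rpow_le_clamp_rpow (t := ‖A‖) hem hee (by linarith : q - 2 ≤ 0)
    have := rpow_pos_of_pos (hem.trans_le hee) (q - 2)
    nlinarith
  have hinner : ⟪B, A⟫ ≤ ‖B‖ * ‖A‖ := real_inner_le_norm B A
  rw [real_inner_smul_left, inner_sub_right, real_inner_self_eq_norm_sq, norm_sub_sq_real,
    real_inner_comm]
  unfold kappaStarDeriv at hscalar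
  nlinarith [mul_nonneg (sub_nonneg.2 hweight) (sub_nonneg.2 hinner)]

lemma half_clamp_rpow_mul_sq_le (hq1 : 1 < q) (hq2 : q ≤ 2) (hem : 0 < em) (hee : em ≤ ep)
    (A B : E) :
    1 / 2 * (max em (min ‖B‖ ep) ^ (q - 2) * ‖B - A‖ ^ 2) ≤ 1 / (q - 1) * (ep / em) ^ (2 - q)
      * (kappaStar q em ep ‖B‖ - kappaStar q em ep ‖A‖
        - ⟪max em (min ‖A‖ ep) ^ (q - 2) • A, B - A⟫) := by
  have hep : 0 < ep := hem.trans_le hee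
  have hq : 0 < q - 1 := by linarith
  have hvec := kappaStar_norm_add_inner_le hq1.le hq2 hem hee A B
  have hweight := clamp_rpow_le (t := ‖B‖) (ep := ep) hem (by linarith : q - 2 ≤ 0)
  have hscale := div_rpow_sub_mul_rpow_sub hem hep q
  calc 1 / 2 * (max em (min ‖B‖ ep) ^ (q - 2) * ‖B - A‖ ^ 2)
      ≤ 1 / 2 * (em ^ (q - 2) * ‖B - A‖ ^ 2) := by gcongr
    _ = 1 / (q - 1) * (ep / em) ^ (2 - q) * ((q - 1) * ep ^ (q - 2) / 2 * ‖B - A‖ ^ 2) := by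
      rw [← hscale]; field_simp
    _ ≤ _ := by gcongr; linarith

end InnerProductSpace

section Integral

variable {α E : Type*} [MeasurableSpace α] {μ : Measure α} [NormedAddCommGroup E] {q em ep : ℝ}

lemma integrable_kappaStar_norm [IsFiniteMeasure μ] (hq1 : 1 ≤ q) (hq2 : q ≤ 2) (hem : 0 < em)
    (hee : em ≤ ep) {f : α → E} (hf : MemLp f 2 μ) :
    Integrable (fun x => kappaStar q em ep ‖f x‖) μ := by
  have hcont : Continuous (kappaStar q em ep) := continuous_iff_continuousAt.2 fun t =>
    (hasDerivAt_kappaStar (by linarith) hem hee t).continuousAt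
  have hbound :
      Integrable (fun x => 1 / 2 * em ^ (q - 2) * ‖f x‖ ^ 2 + (1 / q - 1 / 2) * ep ^ q) μ :=
    (((memLp_two_iff_integrable_sq_norm hf.1).1 hf).const_mul _).add (integrable_const _)
  refine hbound.mono' (hcont.comp_aestronglyMeasurable hf.1.norm) (ae_of_all _ fun x => ?_)
  simpa only [Real.norm_eq_abs, mul_assoc] using abs_kappaStar_le hq1 hq2 hem hee ‖f x‖

variable [InnerProductSpace ℝ E]

lemma MeasureTheory.MemLp.integrable_inner {f g : α → E} (hf : MemLp f 2 μ) (hg : MemLp g 2 μ) :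
    Integrable (fun x => ⟪f x, g x⟫) μ :=
  (L2.integrable_inner (hf.toLp f) (hg.toLp g)).congr <| by
    filter_upwards [hf.coeFn_toLp, hg.coeFn_toLp] with x hfx hgx
    rw [hfx, hgx]

lemma half_integral_clamp_rpow_mul_sq_le [IsFiniteMeasure μ] (hq1 : 1 < q) (hq2 : q ≤ 2)
    (hem : 0 < em) (hee : em ≤ ep) {σ τ : α → E} (hσ : MemLp σ 2 μ) (hτ : MemLp τ 2 μ)
    (horth : ∫ x, ⟪max em (min ‖σ x‖ ep) ^ (q - 2) • σ x, τ x - σ x⟫ ∂μ = 0) :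
    1 / 2 * ∫ x, max em (min ‖τ x‖ ep) ^ (q - 2) * ‖τ x - σ x‖ ^ 2 ∂μ
      ≤ 1 / (q - 1) * (ep / em) ^ (2 - q)
        * (∫ x, kappaStar q em ep ‖τ x‖ ∂μ - ∫ x, kappaStar q em ep ‖σ x‖ ∂μ) := by
  have hpow : q - 2 ≤ 0 := by linarith
  have hweight_meas : ∀ f : α → E, MemLp f 2 μ →
      AEStronglyMeasurable (fun x => max em (min ‖f x‖ ep) ^ (q - 2)) μ := fun f hf =>
    (continuous_clamp_rpow hem _).comp_aestronglyMeasurable hf.1.norm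
  have hweight_le : ∀ t, ‖max em (min t ep) ^ (q - 2)‖ ≤ em ^ (q - 2) := fun t => by
    rw [Real.norm_eq_abs, abs_of_pos (rpow_pos_of_pos (hem.trans_le (le_max_left _ _)) _)]
    exact clamp_rpow_le hem hpow
  have hA : MemLp (fun x => max em (min ‖σ x‖ ep) ^ (q - 2) • σ x) 2 μ :=
    hσ.of_le_mul ((hweight_meas σ hσ).smul hσ.1) (ae_of_all _ fun x => by
      rw [norm_smul]; exact mul_le_mul_of_nonneg_right (hweight_le _) (norm_nonneg _))
  have hinner : Integrable
      (fun x => ⟪max em (min ‖σ x‖ ep) ^ (q - 2) • σ x, τ x - σ x⟫) μ :=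
    hA.integrable_inner (hτ.sub hσ)
  have hκτ := integrable_kappaStar_norm hq1.le hq2 hem hee hτ
  have hκσ := integrable_kappaStar_norm hq1.le hq2 hem hee hσ
  have hweighted : Integrable (fun x => max em (min ‖τ x‖ ep) ^ (q - 2) * ‖τ x - σ x‖ ^ 2) μ :=
    ((memLp_two_iff_integrable_sq_norm (hτ.sub hσ).1).1 (hτ.sub hσ)).bdd_mul
      (hweight_meas τ hτ) (ae_of_all _ fun x => hweight_le _)
  have hκ : Integrable (fun x => kappaStar q em ep ‖τ x‖ - kappaStar q em ep ‖σ x‖) μ :=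
    hκτ.sub hκσ
  calc 1 / 2 * ∫ x, max em (min ‖τ x‖ ep) ^ (q - 2) * ‖τ x - σ x‖ ^ 2 ∂μ
      = ∫ x, 1 / 2 * (max em (min ‖τ x‖ ep) ^ (q - 2) * ‖τ x - σ x‖ ^ 2) ∂μ :=
        (integral_const_mul _ _).symm
    _ ≤ ∫ x, 1 / (q - 1) * (ep / em) ^ (2 - q) * (kappaStar q em ep ‖τ x‖
          - kappaStar q em ep ‖σ x‖ - ⟪max em (min ‖σ x‖ ep) ^ (q - 2) • σ x, τ x - σ x⟫) ∂μ :=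
        integral_mono (hweighted.const_mul _) ((hκ.sub hinner).const_mul _)
          fun x => half_clamp_rpow_mul_sq_le hq1 hq2 hem hee (σ x) (τ x)
    _ = _ := by
      rw [integral_const_mul, integral_sub hκ hinner, integral_sub hκτ hκσ, horth,
        sub_zero]

end Integral

/-- second addend estimate in the proof of exponential decay.
For `1 < q < 2` there is a constant `C_q < ∞` depending solely on `q` (independent of `ε`)
such that: whenever `Ω ⊂ ℝ^d` is measurable of finite measure, `σ_ε, τ_n ∈ L²(Ω;ℝ^d)`
satisfy the Euler–Lagrange orthogonality `∫_Ω A*_ε(σ_ε)·(τ_n - σ_ε) dx = 0`, and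
`w_n = clamp_ε(|τ_n|)^(q-2)`, one has
`(1/2) ∫_Ω w_n |τ_n - σ_ε|² dx ≤ C_q (ε₊/ε₋)^(2-q) (J*_ε(τ_n) - J*_ε(σ_ε))`. -/
theorem stmt17 (q : ℝ) (hq1 : 1 < q) (hq2 : q < 2) :
    ∃ Cq : ℝ, 0 < Cq ∧
      ∀ (d : ℕ) (em ep : ℝ), 0 < em → em ≤ ep →
        ∀ (Ω : Set (EuclideanSpace ℝ (Fin d))), MeasurableSet Ω → volume Ω < ⊤ →
          ∀ (σe τn : EuclideanSpace ℝ (Fin d) → EuclideanSpace ℝ (Fin d)),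
            Measurable σe → Measurable τn →
            IntegrableOn (fun x => ‖σe x‖ ^ 2) Ω volume →
            IntegrableOn (fun x => ‖τn x‖ ^ 2) Ω volume →
            (∫ x in Ω, ⟪Astar q em ep (σe x), τn x - σe x⟫) = 0 →
            (1/2) * (∫ x in Ω, (max em (min ‖τn x‖ ep)) ^ (q-2) * ‖τn x - σe x‖ ^ 2)
              ≤ Cq * (ep / em) ^ (2-q) * (Jeps q em ep Ω τn - Jeps q em ep Ω σe) := by
  refine ⟨1 / (q - 1), one_div_pos.2 (sub_pos.2 hq1), ?_⟩
  intro d em ep hem hee Ω _ hvol σe τn hmσ hmτ hiσ hiτ horth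
  have : IsFiniteMeasure (volume.restrict Ω) := isFiniteMeasure_restrict.2 hvol.ne
  exact half_integral_clamp_rpow_mul_sq_le hq1 hq2.le hem hee
    ((memLp_two_iff_integrable_sq_norm hmσ.aestronglyMeasurable).2 hiσ)
    ((memLp_two_iff_integrable_sq_norm hmτ.aestronglyMeasurable).2 hiτ) horth
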